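/- arXiv:0904.3986 — 6 statements merged into one kernel-verified Lean document; each statement's English description precedes it below -/
import Mathlib

section
/- Let g : ℝ → ℝ be convex, c ∈ ℝ, L ≤ U reals, and let y⁻ ≤ y⁺ be two minimizers of y ↦ c·y + g(y) over ℝ. Define J(x) := min_{u∈[L,U]} ( c·u + g(x+u) ). Then for all x₁ ≤ x₂: (a) if x₁, x₂ ∈ [y⁻ − U, y⁺ − L], then J(x₂) − J(x₁) = −c·(x₂ − x₁); (b) if x₂ ≤ y⁻ − U, then J(x₂) − J(x₁) ≤ −c·(x₂ − x₁); (c) if x₁ ≥ y⁺ − L, then J(x₂) − J(x₁) ≥ −c·(x₂ − x₁). In other words, J has slope exactly −c on the interval [y⁻ − U, y⁺ − L], slope at most −c to its left, and slope at least −c to its right. -/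
/-!
Put `F y = c * y + g y`, so that `J x + c * x` is the minimum of the convex function `F` over
the window `[x + L, x + U]`. Every point between the minimizers `y⁻ ≤ y⁺` minimizes `F`, so
when the window meets `[y⁻, y⁺]` this minimum is `min F`, independently of `x`. Left of `y⁻`
the function `F` is antitone, so the window minimum decreases while the window stays left of
`y⁻`; symmetrically it increases once the window lies right of `y⁺`.
-/

open Set

section Convex

theorem ConvexOn.isMinOn_of_mem_segment {E : Type*} [AddCommGroup E] [Module ℝ E]
    {s : Set E} {f : E → ℝ} {a b z : E} (hf : ConvexOn ℝ s f) (ha : a ∈ s) (hb : b ∈ s)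
    (hfa : IsMinOn f s a) (hfb : IsMinOn f s b) (hz : z ∈ segment ℝ a b) : IsMinOn f s z :=
  isMinOn_iff.2 fun y hy =>
    (hf.le_on_segment ha hb hz).trans (max_le (isMinOn_iff.1 hfa y hy) (isMinOn_iff.1 hfb y hy))

variable {s : Set ℝ} {f : ℝ → ℝ} {m : ℝ}

theorem ConvexOn.antitoneOn_of_isMinOn (hf : ConvexOn ℝ s f) (hm : m ∈ s)
    (hfm : IsMinOn f s m) : AntitoneOn f (s ∩ Iic m) := by
  rintro a ⟨has, -⟩ b ⟨-, hbm⟩ hab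
  have hb : b ∈ segment ℝ a m := by rw [segment_eq_Icc (hab.trans hbm)]; exact ⟨hab, hbm⟩
  exact (hf.le_on_segment has hm hb).trans (max_le le_rfl (isMinOn_iff.1 hfm a has))

theorem ConvexOn.monotoneOn_of_isMinOn (hf : ConvexOn ℝ s f) (hm : m ∈ s)
    (hfm : IsMinOn f s m) : MonotoneOn f (s ∩ Ici m) := by
  rintro a ⟨-, hma⟩ b ⟨hbs, -⟩ hab
  have ha : a ∈ segment ℝ m b := by rw [segment_eq_Icc (hma.trans hab)]; exact ⟨hma, hab⟩
  exact (hf.le_on_segment hm hbs ha).trans (max_le (isMinOn_iff.1 hfm b hbs) le_rfl)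

end Convex

def IsWindowMin (F : ℝ → ℝ) (L U : ℝ) (φ : ℝ → ℝ) : Prop :=
  ∀ x, IsLeast (F '' Icc (x + L) (x + U)) (φ x)

namespace IsWindowMin

variable {F φ : ℝ → ℝ} {L U : ℝ}

theorem antitoneOn (hφ : IsWindowMin F L U φ) (hLU : L ≤ U) {m : ℝ}
    (hF : AntitoneOn F (Iic m)) : AntitoneOn φ (Iic (m - U)) := by
  intro x₁ _ x₂ (hx₂ : x₂ ≤ m - U) h₁₂
  obtain ⟨y, ⟨-, hy⟩, hFy⟩ := (hφ x₁).1
  calc φ x₂ ≤ F (x₂ + U) := (hφ x₂).2 (mem_image_of_mem F ⟨by linarith, le_rfl⟩)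
    _ ≤ F y := hF (show y ≤ m by linarith) (show x₂ + U ≤ m by linarith) (by linarith)
    _ = φ x₁ := hFy

theorem monotoneOn (hφ : IsWindowMin F L U φ) (hLU : L ≤ U) {m : ℝ}
    (hF : MonotoneOn F (Ici m)) : MonotoneOn φ (Ici (m - L)) := by
  intro x₁ (hx₁ : m - L ≤ x₁) x₂ _ h₁₂
  obtain ⟨y, ⟨hy, -⟩, hFy⟩ := (hφ x₂).1
  calc φ x₁ ≤ F (x₁ + L) := (hφ x₁).2 (mem_image_of_mem F ⟨le_rfl, by linarith⟩)
    _ ≤ F y := hF (show m ≤ x₁ + L by linarith) (show m ≤ y by linarith) (by linarith)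
    _ = φ x₂ := hFy

theorem eq_of_isMinOn (hφ : IsWindowMin F L U φ) (hLU : L ≤ U) {ym yp : ℝ} (hy : ym ≤ yp)
    (hmin : ∀ z ∈ Icc ym yp, IsMinOn F univ z) {x : ℝ} (hx : x ∈ Icc (ym - U) (yp - L)) :
    φ x = F ym := by
  obtain ⟨hx₁, hx₂⟩ := hx
  obtain ⟨y, -, hFy⟩ := (hφ x).1
  set z := max ym (x + L)
  have hz : z ∈ Icc ym yp := ⟨le_max_left _ _, max_le hy (by linarith)⟩
  have hzx : z ∈ Icc (x + L) (x + U) := ⟨le_max_right _ _, max_le (by linarith) (by linarith)⟩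
  refine le_antisymm ?_ ?_
  · calc φ x ≤ F z := (hφ x).2 (mem_image_of_mem F hzx)
      _ ≤ F ym := isMinOn_univ_iff.1 (hmin z hz) ym
  · exact hFy ▸ isMinOn_univ_iff.1 (hmin ym ⟨le_rfl, hy⟩) y

end IsWindowMin

theorem isWindowMin_add_mul {g J : ℝ → ℝ} {c L U : ℝ}
    (hJ : ∀ x, IsLeast {v | ∃ u ∈ Icc L U, v = c * u + g (x + u)} (J x)) :
    IsWindowMin (fun y => c * y + g y) L U (fun x => J x + c * x) := by
  refine fun x => ⟨?_, ?_⟩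
  · obtain ⟨u, ⟨hLu, huU⟩, hJx⟩ := (hJ x).1
    exact ⟨x + u, ⟨by linarith, by linarith⟩, show _ = J x + c * x by rw [hJx]; ring⟩
  · rintro _ ⟨y, ⟨hLy, hyU⟩, rfl⟩
    have hJx : J x ≤ c * (y - x) + g (x + (y - x)) :=
      (hJ x).2 ⟨y - x, ⟨by linarith, by linarith⟩, rfl⟩
    rw [add_sub_cancel] at hJx
    show J x + c * x ≤ c * y + g y
    linarith

/-- property P4: slope of the optimal value function
`J x = min_{u ∈ [L,U]} (c·u + g (x+u))` relative to `-c`, where `y⁻ ≤ y⁺` are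
minimizers of `y ↦ c·y + g y`. -/
theorem value_function_slope
    (g : ℝ → ℝ) (hg : ConvexOn ℝ Set.univ g)
    (c L U : ℝ) (hLU : L ≤ U)
    (ym yp : ℝ) (hy : ym ≤ yp)
    (hym : ∀ y : ℝ, c * ym + g ym ≤ c * y + g y)
    (hyp : ∀ y : ℝ, c * yp + g yp ≤ c * y + g y)
    (J : ℝ → ℝ)
    (hJ : ∀ x : ℝ,
      IsLeast { y | ∃ u ∈ Set.Icc L U, y = c * u + g (x + u) } (J x)) :
    ∀ x1 x2 : ℝ, x1 ≤ x2 →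
      ((x1 ∈ Set.Icc (ym - U) (yp - L) ∧ x2 ∈ Set.Icc (ym - U) (yp - L)) →
          J x2 - J x1 = -c * (x2 - x1)) ∧
      (x2 ≤ ym - U → J x2 - J x1 ≤ -c * (x2 - x1)) ∧
      (yp - L ≤ x1 → -c * (x2 - x1) ≤ J x2 - J x1) := by
  set F : ℝ → ℝ := fun y => c * y + g y
  have hF : ConvexOn ℝ univ F := ((LinearMap.mulLeft ℝ c).convexOn convex_univ).add hg
  have hFym : IsMinOn F univ ym := isMinOn_univ_iff.2 hym
  have hFyp : IsMinOn F univ yp := isMinOn_univ_iff.2 hyp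
  have hφ := isWindowMin_add_mul hJ
  intro x1 x2 h12
  refine ⟨fun ⟨hx1, hx2⟩ => ?_, fun hx2 => ?_, fun hx1 => ?_⟩
  · have hmin : ∀ z ∈ Icc ym yp, IsMinOn F univ z := fun z hz =>
      hF.isMinOn_of_mem_segment trivial trivial hFym hFyp (by rwa [segment_eq_Icc hy])
    have h1 : J x1 + c * x1 = F ym := hφ.eq_of_isMinOn hLU hy hmin hx1
    have h2 : J x2 + c * x2 = F ym := hφ.eq_of_isMinOn hLU hy hmin hx2
    linarith
  · have hFanti : AntitoneOn F (Iic ym) := by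
      simpa only [univ_inter] using hF.antitoneOn_of_isMinOn trivial hFym
    have : J x2 + c * x2 ≤ J x1 + c * x1 :=
      hφ.antitoneOn hLU hFanti (mem_Iic.2 (h12.trans hx2)) (mem_Iic.2 hx2) h12
    linarith
  · have hFmono : MonotoneOn F (Ici yp) := by
      simpa only [univ_inter] using hF.monotoneOn_of_isMinOn trivial hFyp
    have : J x1 + c * x1 ≤ J x2 + c * x2 :=
      hφ.monotoneOn hLU hFmono (mem_Ici.2 hx1) (mem_Ici.2 (hx1.trans h12)) h12
    linarith
end

section
/- Fix k ≥ 2, vectors a, b ∈ ℝ^k and scalars a₀, b₀ ∈ ℝ, define π : ℝ^k → ℝ² by π(w) = (a₀ + Σ_{i=1}^k a_i·w_i, b₀ + Σ_{i=1}^k b_i·w_i), and let Θ := π([0,1]^k). Then the set of extreme points of Θ is finite with cardinality at most 2k; moreover its cardinality is strictly less than 2k if and only if there exist indices i ≠ j in {1,…,k} such that the columns (a_i, b_i) and (a_j, b_j) are linearly dependent (equivalently a_i·b_j = a_j·b_i). -/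
/-- The affine projection `π : ℝ^k → ℝ²` defining a zonogon. -/
def zonogonMap (k : ℕ) (a b : Fin k → ℝ) (a0 b0 : ℝ) (w : Fin k → ℝ) : ℝ × ℝ :=
  (a0 + ∑ i, a i * w i, b0 + ∑ i, b i * w i)

/-- The unit hypercube `[0,1]^k ⊂ ℝ^k`. -/
def unitCube (k : ℕ) : Set (Fin k → ℝ) :=
  { w | ∀ i, w i ∈ Set.Icc (0 : ℝ) 1 }

/-!
A functional `ℓ` vanishing on no nonzero generator `gᵢ` attains its maximum on the zonotope
`c + ∑ᵢ [0,1] gᵢ` only at the vertex `c + ∑_{ℓ gᵢ > 0} gᵢ`. Conversely, a functional separating an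
extreme point `x` from the other vertices cannot vanish on a nonzero `gᵢ`, for then `x` would tie
with the vertex `x ± gᵢ`. Hence the extreme points correspond bijectively to the sign patterns
`{i | ℓ gᵢ > 0}` of such generic functionals.

In the plane, after a shear we may assume that `aᵢ = 0` only for zero generators. A generic
functional is then, up to a positive factor, `±(t x - y)` with `t` outside the set `S` of slopes
`bᵢ / aᵢ`, or `±x`; its sign pattern is determined by the lower cut `{s ∈ S | s < t}` of `S`, or
by its complement. A chain `S` has `|S| + 1` lower cuts and only `∅` and `S` are also upper cuts,
which gives `max (2 |S|) 1` extreme points; and `|S| = k` exactly when no two generators are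
parallel.
-/

open Set

noncomputable section

section Cube

variable {ι : Type*}

theorem indicator_one_mem_Icc (s : Set ι) : s.indicator (1 : ι → ℝ) ∈ Icc 0 1 :=
  ⟨indicator_nonneg fun _ _ ↦ zero_le_one, indicator_le_self' fun _ _ ↦ zero_le_one⟩

theorem range_indicator_one :
    range (fun s : Set ι ↦ s.indicator (1 : ι → ℝ)) = univ.pi fun _ ↦ {0, 1} := by
  ext w
  simp only [mem_range, mem_pi, mem_univ, true_implies, mem_insert_iff, mem_singleton_iff]
  constructor
  · rintro ⟨s, rfl⟩ i
    by_cases hi : i ∈ s <;> simp [hi]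
  · intro hw
    refine ⟨{i | w i = 1}, funext fun i ↦ ?_⟩
    rcases hw i with h | h <;> simp [h]

theorem convexHull_range_indicator_one [Finite ι] :
    convexHull ℝ (range fun s : Set ι ↦ s.indicator (1 : ι → ℝ)) = Icc 0 1 := by
  rw [range_indicator_one, convexHull_pi, ← pi_univ_Icc]
  simp_rw [convexHull_pair, segment_eq_Icc zero_le_one]
  rfl

end Cube

section Zonotope

variable {E F : Type*} [NormedAddCommGroup E] [NormedSpace ℝ E] [NormedAddCommGroup F]
  [NormedSpace ℝ F] {ι : Type*}

def posSet (g : ι → E) (ℓ : StrongDual ℝ E) : Set ι := {i | 0 < ℓ (g i)}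

def IsGeneric (g : ι → E) (ℓ : StrongDual ℝ E) : Prop := ∀ i, g i ≠ 0 → ℓ (g i) ≠ 0

def genericPatterns (g : ι → E) : Set (Set ι) := posSet g '' {ℓ | IsGeneric g ℓ}

theorem mul_le_indicator_posSet_mul {g : ι → E} {ℓ : StrongDual ℝ E} {w : ι → ℝ}
    (hw : w ∈ Icc 0 1) (i : ι) : w i * ℓ (g i) ≤ (posSet g ℓ).indicator 1 i * ℓ (g i) := by
  by_cases hi : 0 < ℓ (g i)
  · rw [indicator_of_mem (show i ∈ posSet g ℓ from hi), Pi.one_apply, one_mul]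
    exact mul_le_of_le_one_left hi.le (hw.2 i)
  · rw [indicator_of_notMem (show i ∉ posSet g ℓ from hi), zero_mul]
    exact mul_nonpos_of_nonneg_of_nonpos (hw.1 i) (not_lt.mp hi)

theorem genericPatterns_comp (A : E ≃L[ℝ] F) (g : ι → E) :
    genericPatterns (A ∘ g) = genericPatterns g := by
  ext s
  constructor
  · rintro ⟨ℓ, hℓ, rfl⟩
    exact ⟨ℓ.comp (A : E →L[ℝ] F), fun i hi ↦ hℓ i (by simpa using hi), rfl⟩
  · rintro ⟨ℓ, hℓ, rfl⟩
    refine ⟨ℓ.comp (A.symm : F →L[ℝ] E), fun i hi ↦ ?_, ?_⟩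
    · simpa using hℓ i (by simpa using hi)
    · simp [posSet]

variable [Fintype ι]

def zonotopeMap (c : E) (g : ι → E) (w : ι → ℝ) : E := c + ∑ i, w i • g i

def zonotope (c : E) (g : ι → E) : Set E := zonotopeMap c g '' Icc 0 1

def zonotopeVertex (c : E) (g : ι → E) (s : Set ι) : E := zonotopeMap c g (s.indicator 1)

variable {c : E} {g : ι → E} {ℓ : StrongDual ℝ E}

theorem zonotopeVertex_mem (s : Set ι) : zonotopeVertex c g s ∈ zonotope c g :=
  mem_image_of_mem _ (indicator_one_mem_Icc s)

theorem zonotopeMap_congr {w w' : ι → ℝ} (h : ∀ i, g i ≠ 0 → w i = w' i) :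
    zonotopeMap c g w = zonotopeMap c g w' := by
  unfold zonotopeMap
  congr 1
  refine Finset.sum_congr rfl fun i _ ↦ ?_
  by_cases hi : g i = 0
  · simp [hi]
  · rw [h i hi]

theorem zonotopeVertex_insert {s : Set ι} {i : ι} (hi : i ∉ s) :
    zonotopeVertex c g (insert i s) = zonotopeVertex c g s + g i := by
  simp only [zonotopeVertex, zonotopeMap]
  rw [insert_eq, indicator_union_of_disjoint (disjoint_singleton_left.mpr hi)]
  simp only [add_smul, Finset.sum_add_distrib]
  rw [Finset.sum_eq_single i (fun j _ hj ↦ by simp [hj]) (by simp)]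
  simp only [indicator_of_mem (mem_singleton i), Pi.one_apply, one_smul]
  abel

theorem zonotope_eq_convexHull : zonotope c g = convexHull ℝ (range (zonotopeVertex c g)) := by
  have hmap : zonotopeMap c g =
      ⇑(AffineMap.const ℝ (ι → ℝ) c + (Fintype.linearCombination ℝ g).toAffineMap) := by
    ext w; simp [zonotopeMap, Fintype.linearCombination_apply]
  rw [zonotope, ← convexHull_range_indicator_one, hmap, AffineMap.image_convexHull, ← range_comp]
  rfl

theorem apply_zonotopeMap (w : ι → ℝ) :
    ℓ (zonotopeMap c g w) = ℓ c + ∑ i, w i * ℓ (g i) := by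
  simp [zonotopeMap, map_sum, map_smul]

theorem apply_zonotopeMap_le {w : ι → ℝ} (hw : w ∈ Icc 0 1) :
    ℓ (zonotopeMap c g w) ≤ ℓ (zonotopeVertex c g (posSet g ℓ)) := by
  rw [zonotopeVertex, apply_zonotopeMap, apply_zonotopeMap]
  exact (add_le_add_iff_left _).mpr (Finset.sum_le_sum fun i _ ↦ mul_le_indicator_posSet_mul hw i)

theorem eq_indicator_of_apply_zonotopeVertex_le (hℓ : IsGeneric g ℓ) {w : ι → ℝ}
    (hw : w ∈ Icc 0 1) (h : ℓ (zonotopeVertex c g (posSet g ℓ)) ≤ ℓ (zonotopeMap c g w))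
    {i : ι} (hi : g i ≠ 0) : w i = (posSet g ℓ).indicator 1 i := by
  rw [zonotopeVertex, apply_zonotopeMap, apply_zonotopeMap, add_le_add_iff_left] at h
  have hle : ∀ j ∈ Finset.univ, w j * ℓ (g j) ≤ (posSet g ℓ).indicator 1 j * ℓ (g j) :=
    fun j _ ↦ mul_le_indicator_posSet_mul hw j
  have hterm := (Finset.sum_eq_sum_iff_of_le hle).mp (le_antisymm (Finset.sum_le_sum hle) h) i
    (Finset.mem_univ i)
  exact mul_right_cancel₀ (hℓ i hi) hterm

theorem eq_zonotopeVertex_of_apply_le (hℓ : IsGeneric g ℓ) {x : E} (hx : x ∈ zonotope c g)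
    (h : ℓ (zonotopeVertex c g (posSet g ℓ)) ≤ ℓ x) : x = zonotopeVertex c g (posSet g ℓ) := by
  obtain ⟨w, hw, rfl⟩ := hx
  exact zonotopeMap_congr fun i hi ↦ eq_indicator_of_apply_zonotopeVertex_le hℓ hw h hi

theorem zonotopeVertex_mem_exposedPoints (hℓ : IsGeneric g ℓ) :
    zonotopeVertex c g (posSet g ℓ) ∈ (zonotope c g).exposedPoints ℝ := by
  refine ⟨zonotopeVertex_mem _, ℓ, fun x hx ↦ ⟨?_, eq_zonotopeVertex_of_apply_le hℓ hx⟩⟩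
  obtain ⟨w, hw, rfl⟩ := hx
  exact apply_zonotopeMap_le hw

theorem posSet_eq_of_zonotopeVertex_eq (hℓ : IsGeneric g ℓ) {ℓ' : StrongDual ℝ E}
    (h : zonotopeVertex c g (posSet g ℓ) = zonotopeVertex c g (posSet g ℓ')) :
    posSet g ℓ = posSet g ℓ' := by
  ext i
  by_cases hi : g i = 0
  · simp [posSet, hi]
  have := eq_indicator_of_apply_zonotopeVertex_le hℓ (indicator_one_mem_Icc _) (congrArg ℓ h).le hi
  by_cases h₁ : i ∈ posSet g ℓ <;> by_cases h₂ : i ∈ posSet g ℓ' <;> simp_all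

theorem isGeneric_of_apply_lt {s : Set ι} (hmax : ∀ t, zonotopeVertex c g t ≠ zonotopeVertex c g s →
      ℓ (zonotopeVertex c g t) < ℓ (zonotopeVertex c g s)) : IsGeneric g ℓ := by
  intro i hi hℓi
  have hne (t : Set ι) : zonotopeVertex c g t + g i ≠ zonotopeVertex c g t := by simpa using hi
  by_cases his : i ∈ s
  · have hs := zonotopeVertex_insert (c := c) (g := g)
      (notMem_sdiff_of_mem (s := s) (mem_singleton i))
    rw [insert_sdiff_singleton, insert_eq_of_mem his] at hs
    refine (hmax (s \ {i}) (hs ▸ (hne _).symm)).ne ?_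
    rw [hs, map_add, hℓi, add_zero]
  · have hs := zonotopeVertex_insert (c := c) (g := g) his
    refine (hmax (insert i s) (hs ▸ hne _)).ne' ?_
    rw [hs, map_add, hℓi, add_zero]

theorem exists_isGeneric_of_mem_extremePoints {x : E} (hx : x ∈ (zonotope c g).extremePoints ℝ) :
    ∃ ℓ : StrongDual ℝ E, IsGeneric g ℓ ∧ x = zonotopeVertex c g (posSet g ℓ) := by
  set V := range (zonotopeVertex c g)
  have hZ : zonotope c g = convexHull ℝ V := zonotope_eq_convexHull
  rw [hZ] at hx
  have hsep : x ∉ convexHull ℝ (V \ {x}) := fun h ↦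
    ((convex_convexHull ℝ V).mem_extremePoints_iff_mem_sdiff_convexHull_sdiff.mp hx).2
      (convexHull_mono (sdiff_subset_sdiff_left (subset_convexHull ℝ V)) h)
  obtain ⟨ℓ, u, hℓu, hux⟩ := geometric_hahn_banach_closed_point (convex_convexHull ℝ _)
    ((finite_range _).sdiff.isClosed_convexHull (𝕜 := ℝ)) hsep
  have hmax : ∀ y ∈ V, y ≠ x → ℓ y < ℓ x := fun y hy hyx ↦
    (hℓu y (subset_convexHull ℝ _ ⟨hy, hyx⟩)).trans hux
  obtain ⟨s, rfl⟩ := extremePoints_convexHull_subset hx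
  have hℓ : IsGeneric g ℓ := isGeneric_of_apply_lt fun t ht ↦ hmax _ (mem_range_self t) ht
  refine ⟨ℓ, hℓ, eq_zonotopeVertex_of_apply_le hℓ (hZ ▸ extremePoints_subset hx) ?_⟩
  have hle : convexHull ℝ V ⊆ {y | ℓ y ≤ ℓ (zonotopeVertex c g s)} :=
    convexHull_min (fun y hy ↦ (eq_or_ne y _).elim (fun h ↦ (congrArg ℓ h).le)
      fun h ↦ (hmax y hy h).le) (convex_halfSpace_le ℓ.isLinear _)
  exact hle (hZ ▸ zonotopeVertex_mem _)

theorem extremePoints_zonotope :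
    (zonotope c g).extremePoints ℝ = zonotopeVertex c g '' genericPatterns g := by
  ext x
  constructor
  · intro hx
    obtain ⟨ℓ, hℓ, rfl⟩ := exists_isGeneric_of_mem_extremePoints hx
    exact ⟨_, ⟨ℓ, hℓ, rfl⟩, rfl⟩
  · rintro ⟨_, ⟨ℓ, hℓ, rfl⟩, rfl⟩
    exact exposedPoints_subset_extremePoints (zonotopeVertex_mem_exposedPoints hℓ)

theorem finite_extremePoints_zonotope : ((zonotope c g).extremePoints ℝ).Finite := by
  rw [extremePoints_zonotope]
  exact (toFinite _).image _

theorem ncard_extremePoints_zonotope :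
    ((zonotope c g).extremePoints ℝ).ncard = (genericPatterns g).ncard := by
  have hinj : InjOn (zonotopeVertex c g) (genericPatterns g) := by
    rintro _ ⟨ℓ, hℓ, rfl⟩ _ ⟨ℓ', -, rfl⟩ h
    exact posSet_eq_of_zonotopeVertex_eq hℓ h
  rw [extremePoints_zonotope, hinj.ncard_image]

end Zonotope

section LowerCuts

variable {α : Type*} [LinearOrder α]

def lowerCuts (R : Finset α) : Set (Finset α) := range fun t ↦ R.filter (· < t)

theorem exists_notMem_filter_lt_eq [DenselyOrdered α] [NoMinOrder α] (R : Finset α) (t : α) :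
    ∃ t' ∉ R, R.filter (· < t') = R.filter (· < t) := by
  obtain ⟨t', ht't, ht'⟩ : ∃ t' < t, ∀ r ∈ R, r < t → r < t' := by
    rcases (R.filter (· < t)).eq_empty_or_nonempty with h | h
    · obtain ⟨t', ht'⟩ := exists_lt t
      exact ⟨t', ht', fun r hr hrt ↦ by simp [Finset.filter_eq_empty_iff.mp h hr] at hrt⟩
    · obtain ⟨t', hm, ht⟩ := exists_between (Finset.mem_filter.mp (Finset.max'_mem _ h)).2
      exact ⟨t', ht, fun r hr hrt ↦
        (Finset.le_max' _ r (Finset.mem_filter.mpr ⟨hr, hrt⟩)).trans_lt hm⟩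
  exact ⟨t', fun h ↦ (ht' t' h ht't).false,
    Finset.filter_congr fun r hr ↦ ⟨fun h ↦ h.trans ht't, ht' r hr⟩⟩

theorem lowerCuts_finite (R : Finset α) : (lowerCuts R).Finite :=
  R.powerset.finite_toSet.subset <| by
    rintro _ ⟨t, rfl⟩
    exact Finset.mem_powerset.mpr (Finset.filter_subset _ _)

theorem subset_of_mem_lowerCuts {R X : Finset α} (hX : X ∈ lowerCuts R) : X ⊆ R := by
  obtain ⟨t, rfl⟩ := hX
  exact Finset.filter_subset _ _

theorem empty_mem_lowerCuts [Nonempty α] (R : Finset α) : ∅ ∈ lowerCuts R := by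
  rcases R.eq_empty_or_nonempty with rfl | hR
  · exact ⟨Classical.arbitrary α, rfl⟩
  · exact ⟨R.min' hR, Finset.filter_false_of_mem fun r hr ↦ not_lt.2 (R.min'_le r hr)⟩

theorem self_mem_lowerCuts [Nonempty α] [NoMaxOrder α] (R : Finset α) : R ∈ lowerCuts R := by
  obtain ⟨M, hM⟩ := R.exists_le
  obtain ⟨t, ht⟩ := exists_gt M
  exact ⟨t, Finset.filter_true_of_mem fun r hr ↦ (hM r hr).trans_lt ht⟩

theorem lowerCuts_insert_of_forall_lt [Nonempty α] [NoMaxOrder α] {R : Finset α} {M : α}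
    (hM : ∀ r ∈ R, r < M) : lowerCuts (insert M R) = insert (insert M R) (lowerCuts R) := by
  ext X
  constructor
  · rintro ⟨t, rfl⟩
    by_cases hMt : M < t
    · refine .inl (Finset.filter_true_of_mem fun r hr ↦ ?_)
      rcases Finset.mem_insert.mp hr with rfl | hr
      exacts [hMt, (hM r hr).trans hMt]
    · refine .inr ⟨t, ?_⟩
      beta_reduce
      rw [Finset.filter_insert, if_neg hMt]
  · rintro (rfl | ⟨t, rfl⟩)
    · exact self_mem_lowerCuts _
    · refine ⟨min t M, ?_⟩
      beta_reduce
      rw [Finset.filter_insert, if_neg (by simp)]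
      exact Finset.filter_congr fun r hr ↦ by simp [hM r hr]

theorem ncard_lowerCuts [Nonempty α] [NoMaxOrder α] (R : Finset α) :
    (lowerCuts R).ncard = R.card + 1 := by
  induction R using Finset.induction_on_max with
  | empty => simp [lowerCuts]
  | insert M R hM ih =>
    have hMR : M ∉ R := fun h ↦ (hM M h).false
    rw [lowerCuts_insert_of_forall_lt hM, ncard_insert_of_notMem _ (lowerCuts_finite R), ih,
      Finset.card_insert_of_notMem hMR]
    exact fun h ↦ hMR (subset_of_mem_lowerCuts h (Finset.mem_insert_self M R))

theorem lowerCuts_inter_image_sdiff [Nonempty α] [NoMaxOrder α] (R : Finset α) :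
    lowerCuts R ∩ (R \ ·) '' lowerCuts R = {∅, R} := by
  ext X
  constructor
  · rintro ⟨⟨t, rfl⟩, ⟨_, ⟨t', rfl⟩, h⟩⟩
    have hmem (r : α) (hr : r ∈ R) : r < t ↔ t' ≤ r := by
      simpa [hr] using (Finset.ext_iff.mp h r).symm
    rcases (R.filter (· < t)).eq_empty_or_nonempty with h₀ | ⟨x, hx⟩
    · exact .inl h₀
    obtain ⟨hxR, hxt⟩ := Finset.mem_filter.mp hx
    refine .inr (Finset.filter_true_of_mem fun r hr ↦ ?_)
    rcases lt_or_ge r t' with hrt' | hrt'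
    · exact hrt'.trans_le (((hmem x hxR).mp hxt).trans hxt.le)
    · exact (hmem r hr).mpr hrt'
  · rintro (rfl | hX)
    · exact ⟨empty_mem_lowerCuts R, R, self_mem_lowerCuts R, Finset.sdiff_self R⟩
    · rw [mem_singleton_iff.mp hX]
      exact ⟨self_mem_lowerCuts R, ∅, empty_mem_lowerCuts R, Finset.sdiff_empty⟩

def cuts (R : Finset α) : Set (Finset α) := lowerCuts R ∪ (R \ ·) '' lowerCuts R

theorem subset_of_mem_cuts {R X : Finset α} (hX : X ∈ cuts R) : X ⊆ R := by
  rcases hX with hX | ⟨X, -, rfl⟩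
  exacts [subset_of_mem_lowerCuts hX, Finset.sdiff_subset]

theorem ncard_cuts [Nonempty α] [NoMaxOrder α] (R : Finset α) :
    (cuts R).ncard = max (2 * R.card) 1 := by
  have hinj : InjOn (R \ ·) (lowerCuts R) := fun X hX Y hY h ↦ by
    simpa [Finset.sdiff_sdiff_eq_self (subset_of_mem_lowerCuts hX),
      Finset.sdiff_sdiff_eq_self (subset_of_mem_lowerCuts hY)] using congrArg (R \ ·) h
  have h := ncard_union_add_ncard_inter (lowerCuts R) ((R \ ·) '' lowerCuts R)
    (lowerCuts_finite R) ((lowerCuts_finite R).image _)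
  rw [← cuts, lowerCuts_inter_image_sdiff, hinj.ncard_image, ncard_lowerCuts] at h
  rcases R.eq_empty_or_nonempty with rfl | hR
  · rw [insert_eq_of_mem (mem_singleton _), ncard_singleton, Finset.card_empty] at h
    rw [Finset.card_empty]
    omega
  · rw [ncard_pair hR.ne_empty.symm] at h
    have := hR.card_pos
    omega

end LowerCuts

section Plane

theorem mul_pos_iff_pos_iff_pos {R : Type*} [Ring R] [LinearOrder R] [IsStrictOrderedRing R]
    {x y : R} (hx : x ≠ 0) (hy : y ≠ 0) : 0 < x * y ↔ (0 < x ↔ 0 < y) := by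
  rcases hx.lt_or_gt with hx | hx <;> rcases hy.lt_or_gt with hy | hy
  · simp [mul_pos_of_neg_of_neg hx hy, hx.not_gt, hy.not_gt]
  · simp [(mul_neg_of_neg_of_pos hx hy).not_gt, hx.not_gt, hy]
  · simp [(mul_neg_of_pos_of_neg hx hy).not_gt, hx, hy.not_gt]
  · simp [mul_pos hx hy, hx, hy]

variable {ι : Type*} {a b : ι → ℝ}

-- The sign pattern of `t x - y` on the generators `(aᵢ, bᵢ)` when `X` is the set of slopes
-- below `t`.
def cutPattern (a b : ι → ℝ) (X : Finset ℝ) : Set ι := {i | a i ≠ 0 ∧ (0 < a i ↔ b i / a i ∈ X)}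

theorem cutPattern_empty : cutPattern a b ∅ = {i | a i < 0} := by
  ext i
  by_cases hi : a i = 0
  · simp [cutPattern, hi]
  · simp [cutPattern, hi, Ne.le_iff_lt hi]

theorem prod_ne_zero_iff (hab : ∀ i, a i = 0 → b i = 0) (i : ι) : (a i, b i) ≠ 0 ↔ a i ≠ 0 := by
  simp only [ne_eq, Prod.mk_eq_zero]
  exact ⟨fun h h₀ ↦ h ⟨h₀, hab i h₀⟩, fun h h₀ ↦ h h₀.1⟩

theorem apply_prod (ℓ : StrongDual ℝ (ℝ × ℝ)) (x y : ℝ) :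
    ℓ (x, y) = x * ℓ (1, 0) + y * ℓ (0, 1) := by
  have hxy : ((x, y) : ℝ × ℝ) = x • (1, 0) + y • (0, 1) := by simp
  rw [hxy, map_add, map_smul, map_smul, smul_eq_mul, smul_eq_mul]

variable [Fintype ι]

def slopes (a b : ι → ℝ) : Finset ℝ :=
  (Finset.univ.filter fun i ↦ a i ≠ 0).image fun i ↦ b i / a i

theorem div_mem_slopes {i : ι} (hi : a i ≠ 0) : b i / a i ∈ slopes a b :=
  Finset.mem_image_of_mem _ (Finset.mem_filter.mpr ⟨Finset.mem_univ i, hi⟩)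

theorem mem_slopes_iff {t : ℝ} : t ∈ slopes a b ↔ ∃ i, a i ≠ 0 ∧ t * a i - b i = 0 := by
  simp only [slopes, Finset.mem_image, Finset.mem_filter, Finset.mem_univ, true_and]
  refine exists_congr fun i ↦ and_congr_right fun hi ↦ ?_
  rw [div_eq_iff hi, sub_eq_zero, eq_comm]

theorem mul_sub_ne_zero_of_notMem_slopes {t : ℝ} (ht : t ∉ slopes a b) {i : ι} (hi : a i ≠ 0) :
    t * a i - b i ≠ 0 :=
  fun h ↦ ht (mem_slopes_iff.mpr ⟨i, hi, h⟩)

theorem pos_sub_iff_of_notMem_slopes {t : ℝ} (ht : t ∉ slopes a b) {i : ι} (hi : a i ≠ 0) :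
    0 < t * a i - b i ↔ (0 < a i ↔ b i / a i < t) := by
  have hne : t - b i / a i ≠ 0 := sub_ne_zero.mpr fun h ↦ ht (h ▸ div_mem_slopes hi)
  rw [show t * a i - b i = a i * (t - b i / a i) by field_simp, mul_pos_iff_pos_iff_pos hi hne,
    sub_pos]

theorem cutPattern_slopes : cutPattern a b (slopes a b) = {i | 0 < a i} := by
  ext i
  by_cases hi : a i = 0
  · simp [cutPattern, hi]
  · simp [cutPattern, hi, div_mem_slopes hi]

theorem injOn_cutPattern : InjOn (cutPattern a b) {X | X ⊆ slopes a b} := by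
  intro X hX Y hY h
  ext r
  by_cases hr : r ∈ slopes a b
  · obtain ⟨i, hi, rfl⟩ := Finset.mem_image.mp hr
    have hai := (Finset.mem_filter.mp hi).2
    have := Set.ext_iff.mp h i
    simp only [cutPattern, mem_ofPred_eq, hai, ne_eq, not_false_eq_true, true_and] at this
    tauto
  · exact iff_of_false (fun h ↦ hr (hX h)) (fun h ↦ hr (hY h))

theorem mem_cutPattern_filter_lt (hab : ∀ i, a i = 0 → b i = 0) {t : ℝ} (ht : t ∉ slopes a b)
    (i : ι) : i ∈ cutPattern a b ((slopes a b).filter (· < t)) ↔ 0 < t * a i - b i := by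
  by_cases hi : a i = 0
  · simp [cutPattern, hi, hab i hi]
  · simp only [cutPattern, mem_ofPred_eq, Finset.mem_filter, div_mem_slopes hi, true_and,
      pos_sub_iff_of_notMem_slopes ht hi]
    exact and_iff_right hi

theorem mem_cutPattern_sdiff_filter_lt (hab : ∀ i, a i = 0 → b i = 0) {t : ℝ}
    (ht : t ∉ slopes a b) (i : ι) :
    i ∈ cutPattern a b (slopes a b \ (slopes a b).filter (· < t)) ↔ t * a i - b i < 0 := by
  by_cases hi : a i = 0
  · simp [cutPattern, hi, hab i hi]
  · rw [← not_iff_not, not_lt, (mul_sub_ne_zero_of_notMem_slopes ht hi).symm.le_iff_lt,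
      ← mem_cutPattern_filter_lt hab ht]
    simp only [cutPattern, mem_ofPred_eq, Finset.mem_sdiff, Finset.mem_filter, div_mem_slopes hi,
      true_and]
    tauto

theorem setOf_mul_pos_mem_image_cutPattern {p : ℝ} (hp : ∀ i, a i ≠ 0 → a i * p ≠ 0) :
    {i | 0 < a i * p} ∈ cutPattern a b '' cuts (slopes a b) := by
  rcases lt_trichotomy p 0 with hp | rfl | hp
  · refine ⟨∅, .inl (empty_mem_lowerCuts _), ?_⟩
    ext i
    simp only [cutPattern_empty, mem_ofPred_eq]
    constructor <;> intro h <;> nlinarith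
  · refine ⟨∅, .inl (empty_mem_lowerCuts _), ?_⟩
    simp only [cutPattern_empty, mul_zero, lt_self_iff_false, ofPred_false]
    exact eq_empty_of_forall_notMem fun i hi ↦ hp i hi.ne (mul_zero _)
  · refine ⟨slopes a b, .inl (self_mem_lowerCuts _), ?_⟩
    simp [cutPattern_slopes, mul_pos_iff_of_pos_right hp]

theorem setOf_pos_mem_image_cutPattern (hab : ∀ i, a i = 0 → b i = 0) {p q : ℝ}
    (hpq : ∀ i, a i ≠ 0 → a i * p + b i * q ≠ 0) :
    {i | 0 < a i * p + b i * q} ∈ cutPattern a b '' cuts (slopes a b) := by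
  rcases eq_or_ne q 0 with rfl | hq
  · simp only [mul_zero, add_zero] at hpq ⊢
    exact setOf_mul_pos_mem_image_cutPattern hpq
  -- the functional is `q • (y - t x)`
  obtain ⟨t, rfl⟩ : ∃ t, p = -q * t := ⟨-p / q, by field_simp⟩
  have hval (i : ι) : a i * (-q * t) + b i * q = q * (b i - t * a i) := by ring
  have ht : t ∉ slopes a b := fun ht ↦ by
    obtain ⟨i, hi, h⟩ := mem_slopes_iff.mp ht
    exact hpq i hi (by rw [hval, ← neg_sub, h, neg_zero, mul_zero])
  simp only [hval]
  rcases hq.lt_or_gt with hq | hq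
  · refine ⟨(slopes a b).filter (· < t), .inl ⟨t, rfl⟩, ?_⟩
    ext i
    rw [mem_cutPattern_filter_lt hab ht, mem_ofPred_eq,
      show q * (b i - t * a i) = -q * (t * a i - b i) by ring,
      mul_pos_iff_of_pos_left (neg_pos.mpr hq)]
  · refine ⟨slopes a b \ (slopes a b).filter (· < t), .inr ⟨_, ⟨t, rfl⟩, rfl⟩, ?_⟩
    ext i
    rw [mem_cutPattern_sdiff_filter_lt hab ht, mem_ofPred_eq, mul_pos_iff_of_pos_left hq, sub_pos,
      sub_neg]

theorem cutPattern_mem_genericPatterns (hab : ∀ i, a i = 0 → b i = 0) {X : Finset ℝ}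
    (hX : X ∈ cuts (slopes a b)) : cutPattern a b X ∈ genericPatterns fun i ↦ (a i, b i) := by
  have hline {t : ℝ} (ht : t ∉ slopes a b) : ∃ ℓ : StrongDual ℝ (ℝ × ℝ),
      IsGeneric (fun i ↦ (a i, b i)) ℓ ∧ ∀ i, ℓ (a i, b i) = t * a i - b i :=
    ⟨t • ContinuousLinearMap.fst ℝ ℝ ℝ - ContinuousLinearMap.snd ℝ ℝ ℝ, fun i hi ↦ by
      simpa using mul_sub_ne_zero_of_notMem_slopes ht ((prod_ne_zero_iff hab i).mp hi),
      fun i ↦ by simp⟩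
  rcases hX with ⟨t₀, rfl⟩ | ⟨_, ⟨t₀, rfl⟩, rfl⟩ <;>
    obtain ⟨t, ht, heq⟩ := exists_notMem_filter_lt_eq (slopes a b) t₀ <;>
    obtain ⟨ℓ, hℓ, hℓv⟩ := hline ht <;> simp only [← heq]
  · refine ⟨ℓ, hℓ, ?_⟩
    ext i
    simp [posSet, hℓv, mem_cutPattern_filter_lt hab ht]
  · refine ⟨-ℓ, fun i hi ↦ by simpa using hℓ i hi, ?_⟩
    ext i
    simp [posSet, hℓv, mem_cutPattern_sdiff_filter_lt hab ht]

theorem genericPatterns_prod (hab : ∀ i, a i = 0 → b i = 0) :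
    genericPatterns (fun i ↦ (a i, b i)) = cutPattern a b '' cuts (slopes a b) := by
  refine Subset.antisymm ?_ fun _ ⟨X, hX, h⟩ ↦ h ▸ cutPattern_mem_genericPatterns hab hX
  rintro _ ⟨ℓ, hℓ, rfl⟩
  have hℓv (i : ι) : ℓ (a i, b i) = a i * ℓ (1, 0) + b i * ℓ (0, 1) := apply_prod ℓ _ _
  simp only [posSet, hℓv]
  exact setOf_pos_mem_image_cutPattern hab fun i hi ↦
    hℓv i ▸ hℓ i ((prod_ne_zero_iff hab i).mpr hi)

theorem ncard_genericPatterns_prod (hab : ∀ i, a i = 0 → b i = 0) :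
    (genericPatterns fun i ↦ (a i, b i)).ncard = max (2 * (slopes a b).card) 1 := by
  rw [genericPatterns_prod hab, (injOn_cutPattern.mono fun _ ↦ subset_of_mem_cuts).ncard_image,
    ncard_cuts]

theorem card_slopes_le : (slopes a b).card ≤ Fintype.card ι :=
  Finset.card_image_le.trans (Finset.card_filter_le _ _)

theorem card_slopes_eq_iff [Nontrivial ι] (hab : ∀ i, a i = 0 → b i = 0) :
    (slopes a b).card = Fintype.card ι ↔ ∀ i j, a i * b j = a j * b i → i = j := by
  set N := Finset.univ.filter fun i ↦ a i ≠ 0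
  have hN : N.card ≤ Fintype.card ι := Finset.card_filter_le _ _
  have hslopes : (slopes a b).card ≤ N.card := Finset.card_image_le
  constructor
  · intro h i j hij
    have hNu : N = Finset.univ := Finset.eq_univ_of_card N (by omega)
    have hai (l : ι) : a l ≠ 0 := (Finset.mem_filter.mp (Finset.eq_univ_iff_forall.mp hNu l)).2
    refine Finset.card_image_iff.mp (h.trans (by rw [hNu, Finset.card_univ]) : _ = N.card)
      (by simp [hai]) (by simp [hai]) ?_
    simp only [div_eq_div_iff (hai i) (hai j)]
    linarith
  · intro h
    have hai (i : ι) : a i ≠ 0 := fun hi ↦ by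
      obtain ⟨j, hj⟩ := exists_ne i
      exact hj (h i j (by simp [hi, hab i hi])).symm
    rw [slopes, Finset.filter_true_of_mem fun i _ ↦ hai i, Finset.card_image_of_injOn,
      Finset.card_univ]
    intro i _ j _ hij
    exact h i j (by rw [div_eq_div_iff (hai i) (hai j)] at hij; linarith)

theorem card_slopes_lt_iff [Nontrivial ι] (hab : ∀ i, a i = 0 → b i = 0) :
    (slopes a b).card < Fintype.card ι ↔ ∃ i j, i ≠ j ∧ a i * b j = a j * b i := by
  rw [card_slopes_le.lt_iff_ne, ne_eq, card_slopes_eq_iff hab]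
  push Not
  exact exists₂_congr fun _ _ ↦ and_comm

def shear (s : ℝ) : (ℝ × ℝ) ≃L[ℝ] ℝ × ℝ :=
  .equivOfInverse
    ((ContinuousLinearMap.fst ℝ ℝ ℝ + s • ContinuousLinearMap.snd ℝ ℝ ℝ).prod
      (ContinuousLinearMap.snd ℝ ℝ ℝ))
    ((ContinuousLinearMap.fst ℝ ℝ ℝ - s • ContinuousLinearMap.snd ℝ ℝ ℝ).prod
      (ContinuousLinearMap.snd ℝ ℝ ℝ))
    (fun v ↦ by ext <;> simp) (fun v ↦ by ext <;> simp)

theorem exists_forall_add_mul_ne_zero (a b : ι → ℝ) :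
    ∃ s : ℝ, ∀ i, b i ≠ 0 → a i + s * b i ≠ 0 := by
  obtain ⟨s, hs⟩ := Infinite.exists_notMem_finset (Finset.univ.image fun i ↦ -a i / b i)
  refine ⟨s, fun i hi h ↦ hs (Finset.mem_image.mpr ⟨i, Finset.mem_univ i, ?_⟩)⟩
  rw [div_eq_iff hi]
  linarith

end Plane

end

theorem image_unitCube_eq_zonotope (k : ℕ) (a b : Fin k → ℝ) (a0 b0 : ℝ) :
    zonogonMap k a b a0 b0 '' unitCube k = zonotope (a0, b0) fun i ↦ (a i, b i) := by
  have hcube : unitCube k = Icc 0 1 := by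
    ext w
    simp [unitCube, Pi.le_def, forall_and]
  have hmap : zonogonMap k a b a0 b0 = zonotopeMap (a0, b0) fun i ↦ (a i, b i) := by
    ext w <;> simp [zonogonMap, zonotopeMap, Prod.fst_sum, Prod.snd_sum, mul_comm]
  rw [hcube, hmap]
  rfl

/-- a zonogon with `k ≥ 2` generators has at most `2k` vertices,
with strict inequality iff two of its generators are linearly dependent. -/
theorem zonogon_vertex_count
    (k : ℕ) (hk : 2 ≤ k) (a b : Fin k → ℝ) (a0 b0 : ℝ) :
    (Set.extremePoints ℝ (zonogonMap k a b a0 b0 '' unitCube k)).Finite ∧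
    (Set.extremePoints ℝ (zonogonMap k a b a0 b0 '' unitCube k)).ncard ≤ 2 * k ∧
    ((Set.extremePoints ℝ (zonogonMap k a b a0 b0 '' unitCube k)).ncard < 2 * k ↔
      ∃ i j : Fin k, i ≠ j ∧ a i * b j = a j * b i) := by
  have : Nontrivial (Fin k) := Fin.nontrivial_iff_two_le.mpr hk
  obtain ⟨s, hs⟩ := exists_forall_add_mul_ne_zero a b
  set a' := fun i ↦ a i + s * b i
  have hab : ∀ i, a' i = 0 → b i = 0 := fun i h ↦ by_contra fun hb ↦ hs i hb h
  have hshear : shear s ∘ (fun i ↦ (a i, b i)) = fun i ↦ (a' i, b i) := rfl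
  have hcard : (extremePoints ℝ (zonogonMap k a b a0 b0 '' unitCube k)).ncard =
      max (2 * (slopes a' b).card) 1 := by
    rw [image_unitCube_eq_zonotope, ncard_extremePoints_zonotope,
      ← genericPatterns_comp (shear s), hshear, ncard_genericPatterns_prod hab]
  have hle : (slopes a' b).card ≤ k := card_slopes_le.trans_eq (Fintype.card_fin k)
  have hlt := card_slopes_lt_iff hab
  rw [Fintype.card_fin] at hlt
  refine ⟨image_unitCube_eq_zonotope k a b a0 b0 ▸ finite_extremePoints_zonotope, by omega, ?_⟩
  rw [hcard, show max (2 * (slopes a' b).card) 1 < 2 * k ↔ (slopes a' b).card < k by omega, hlt]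
  exact exists₂_congr fun i j ↦ and_congr_right fun _ ↦
    ⟨fun h ↦ by linear_combination h, fun h ↦ by linear_combination h⟩
end

section
/- Fix k ∈ ℕ, vectors a, b ∈ ℝ^k and scalars a₀, b₀ ∈ ℝ, define π : ℝ^k → ℝ² by π(w) = (a₀ + Σ_{i=1}^k a_i·w_i, b₀ + Σ_{i=1}^k b_i·w_i), and let Θ := π([0,1]^k). If w₁, w₂ ∈ [0,1]^k with w₁ ≠ w₂ satisfy π(w₁) = π(w₂) and this common image is an extreme point of Θ, then there exists an index j ∈ {1,…,k} with a_j = 0 and b_j = 0. -/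
/-!
Both `w₁` and `w₂` lie over the vertex `p`, hence so does their midpoint `m`, since `π` is
affine. Pick `j` with `w₁ j ≠ w₂ j` and put `δ = (w₁ j - w₂ j) / 2`: the points `m ± δ e_j`
are `m` with its `j`-th coordinate replaced by `w₁ j` resp. `w₂ j`, so they lie in the cube.
Their images `p ± δ (a_j, b_j)` have midpoint `p`, and extremality of `p` forces them to
coincide with `p`, i.e. `(a_j, b_j) = 0`.
-/

open Set

section

variable {𝕜 E F : Type*} [Field 𝕜] [LinearOrder 𝕜] [IsStrictOrderedRing 𝕜]
  [AddCommGroup E] [Module 𝕜 E] [AddCommGroup F] [Module 𝕜 F]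

theorem AffineMap.linear_eq_zero_of_mem_extremePoints_image (f : E →ᵃ[𝕜] F) {s : Set E}
    {x v : E} (hsub : x - v ∈ s) (hadd : x + v ∈ s) (hx : f x ∈ (f '' s).extremePoints 𝕜) :
    f.linear v = 0 := by
  have hseg : f x ∈ openSegment 𝕜 (f (x - v)) (f (x + v)) := by
    rw [← image_openSegment]
    exact mem_image_of_mem f (mem_openSegment_sub_add x v)
  have hfix : f (x - v) = f x := hx.2 (mem_image_of_mem f hsub) (mem_image_of_mem f hadd) hseg
  simpa [hfix] using f.linearMap_vsub x (x - v)

end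

variable {k : ℕ}

def zonogonAffineMap (a b : Fin k → ℝ) (a0 b0 : ℝ) : (Fin k → ℝ) →ᵃ[ℝ] ℝ × ℝ where
  toFun := zonogonMap k a b a0 b0
  linear := (dotProductEquiv ℝ (Fin k) a).prod (dotProductEquiv ℝ (Fin k) b)
  map_vadd' w v := by
    simp only [zonogonMap, Pi.vadd_apply', vadd_eq_add, mul_add, Finset.sum_add_distrib,
      LinearMap.prod_apply, Function.prod_apply, dotProductEquiv_apply_apply, dotProduct,
      Prod.mk_add_mk, Prod.mk.injEq]
    constructor <;> ring

@[simp]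
theorem coe_zonogonAffineMap (a b : Fin k → ℝ) (a0 b0 : ℝ) :
    ⇑(zonogonAffineMap a b a0 b0) = zonogonMap k a b a0 b0 := rfl

theorem zonogonAffineMap_linear_single (a b : Fin k → ℝ) (a0 b0 : ℝ) (j : Fin k) (c : ℝ) :
    (zonogonAffineMap a b a0 b0).linear (Pi.single j c) = c • (a j, b j) := by
  simp [zonogonAffineMap, mul_comm]

theorem convex_unitCube : Convex ℝ (unitCube k) :=
  fun _ hx _ hy _ _ hp hq hpq i => convex_Icc 0 1 (hx i) (hy i) hp hq hpq

theorem add_single_mem_unitCube {w : Fin k → ℝ} (hw : w ∈ unitCube k) {j : Fin k} {c : ℝ}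
    (hc : w j + c ∈ Icc (0 : ℝ) 1) : w + Pi.single j c ∈ unitCube k := by
  intro i
  rcases eq_or_ne i j with rfl | hij
  · simpa using hc
  · simpa [hij] using hw i

/-- if two distinct points of the hypercube project to the same
vertex (extreme point) of the zonogon, then some generator is zero. -/
theorem zonogon_vertex_unique_preimage
    (k : ℕ) (a b : Fin k → ℝ) (a0 b0 : ℝ)
    (w1 w2 : Fin k → ℝ) (hw1 : w1 ∈ unitCube k) (hw2 : w2 ∈ unitCube k)
    (hne : w1 ≠ w2)
    (heq : zonogonMap k a b a0 b0 w1 = zonogonMap k a b a0 b0 w2)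
    (hext : zonogonMap k a b a0 b0 w1 ∈
      Set.extremePoints ℝ (zonogonMap k a b a0 b0 '' unitCube k)) :
    ∃ j : Fin k, a j = 0 ∧ b j = 0 := by
  obtain ⟨j, hj⟩ := Function.ne_iff.mp hne
  set m := midpoint ℝ w1 w2
  set δ := (w1 j - w2 j) / 2
  have hmj : m j = (w1 j + w2 j) / 2 := by
    simp only [m, midpoint_eq_smul_add, invOf_eq_inv, smul_add, Pi.add_apply, Pi.smul_apply,
      smul_eq_mul]
    ring
  have hfm : zonogonAffineMap a b a0 b0 m = zonogonMap k a b a0 b0 w1 := by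
    rw [AffineMap.map_midpoint, coe_zonogonAffineMap, ← heq, midpoint_self]
  have hm : m ∈ unitCube k := convex_unitCube.midpoint_mem hw1 hw2
  have hadd : m + Pi.single j δ ∈ unitCube k :=
    add_single_mem_unitCube hm (by convert hw1 j using 1; rw [hmj]; ring)
  have hsub : m - Pi.single j δ ∈ unitCube k := by
    rw [sub_eq_add_neg, ← Pi.single_neg]
    exact add_single_mem_unitCube hm (by convert hw2 j using 1; rw [hmj]; ring)
  have hlin := (zonogonAffineMap a b a0 b0).linear_eq_zero_of_mem_extremePoints_image hsub hadd
    (by rwa [hfm, coe_zonogonAffineMap])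
  rw [zonogonAffineMap_linear_single, smul_eq_zero] at hlin
  have hδ : δ ≠ 0 := div_ne_zero (sub_ne_zero.mpr hj) two_ne_zero
  exact ⟨j, by simpa [Prod.ext_iff] using hlin.resolve_left hδ⟩
end

section
/- Fix k ∈ ℕ, vectors a, b ∈ ℝ^k and scalars a₀, b₀ ∈ ℝ, define π : ℝ^k → ℝ² by π(w) = (a₀ + Σ_{i=1}^k a_i·w_i, b₀ + Σ_{i=1}^k b_i·w_i), and assume b_i > 0 for every i and a₁/b₁ > a₂/b₂ > … > a_k/b_k. Then the k+1 points P_j := (a₀ + Σ_{i=1}^j a_i, b₀ + Σ_{i=1}^j b_i), j = 0, 1, …, k, are pairwise distinct extreme points of the zonogon Θ := π([0,1]^k). -/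
/-!
A vertex of the cube `[0,1]^s` is the unique maximiser of a linear functional `∑ γ i * w i` with
nonzero coefficients: take `w i = 1` exactly where `γ i > 0`. Composing with `π`, the functional
`(x, y) ↦ x - c * y` becomes `∑ (a i - c * b i) * w i` up to a constant, so `π` of that vertex is
an exposed, hence extreme, point of the zonogon. For the sorted generators, a slope `c` strictly
between `a (j+1) / b (j+1)` and `a j / b j` makes exactly the first `j` coefficients positive,
which exposes `P j`. The `P j` are distinct since their second coordinates strictly increase.
-/

open Finset

section Cube

variable {ι : Type*} [DecidableEq ι]

def cubeVertex (T : Finset ι) (i : ι) : ℝ := if i ∈ T then 1 else 0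

lemma cubeVertex_mem_Icc (T : Finset ι) (i : ι) : cubeVertex T i ∈ Set.Icc (0 : ℝ) 1 := by
  unfold cubeVertex
  split_ifs <;> simp

lemma sum_mul_cubeVertex {s T : Finset ι} (hT : T ⊆ s) (f : ι → ℝ) :
    ∑ i ∈ s, f i * cubeVertex T i = ∑ i ∈ T, f i := by
  simp only [cubeVertex, mul_ite, mul_one, mul_zero]
  rw [sum_ite_mem, inter_eq_right.mpr hT]

lemma mul_le_mul_cubeVertex {T : Finset ι} {i : ι} {γ w : ℝ} (hpos : i ∈ T → 0 < γ)
    (hneg : i ∉ T → γ < 0) (hw : w ∈ Set.Icc (0 : ℝ) 1) : γ * w ≤ γ * cubeVertex T i := by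
  obtain ⟨hw0, hw1⟩ := hw
  unfold cubeVertex
  split_ifs with hi
  · nlinarith [hpos hi]
  · nlinarith [hneg hi]

lemma sum_mul_le_sum_mul_cubeVertex {s T : Finset ι} {γ w : ι → ℝ} (hpos : ∀ i ∈ T, 0 < γ i)
    (hneg : ∀ i ∈ s, i ∉ T → γ i < 0) (hw : ∀ i ∈ s, w i ∈ Set.Icc (0 : ℝ) 1) :
    ∑ i ∈ s, γ i * w i ≤ ∑ i ∈ s, γ i * cubeVertex T i :=
  sum_le_sum fun i hi => mul_le_mul_cubeVertex (hpos i) (hneg i hi) (hw i hi)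

lemma eq_cubeVertex_of_sum_mul_eq {s T : Finset ι} {γ w : ι → ℝ} (hpos : ∀ i ∈ T, 0 < γ i)
    (hneg : ∀ i ∈ s, i ∉ T → γ i < 0) (hw : ∀ i ∈ s, w i ∈ Set.Icc (0 : ℝ) 1)
    (heq : ∑ i ∈ s, γ i * w i = ∑ i ∈ s, γ i * cubeVertex T i) :
    ∀ i ∈ s, w i = cubeVertex T i := by
  intro i hi
  have hγ : γ i ≠ 0 := by
    by_cases hiT : i ∈ T
    · exact (hpos i hiT).ne'
    · exact (hneg i hi hiT).ne
  refine mul_left_cancel₀ hγ ?_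
  exact (sum_eq_sum_iff_of_le fun i hi =>
    mul_le_mul_cubeVertex (hpos i) (hneg i hi) (hw i hi)).mp heq i hi

end Cube

theorem mem_extremePoints_zonogon_of_separated {ι : Type*} [DecidableEq ι] {s T : Finset ι}
    (hT : T ⊆ s) {a b : ι → ℝ} {a0 b0 c : ℝ} (hright : ∀ i ∈ T, c * b i < a i)
    (hleft : ∀ i ∈ s, i ∉ T → a i < c * b i) :
    ((a0 + ∑ i ∈ T, a i, b0 + ∑ i ∈ T, b i) : ℝ × ℝ) ∈ Set.extremePoints ℝ
      ((fun w : ι → ℝ => ((a0 + ∑ i ∈ s, a i * w i, b0 + ∑ i ∈ s, b i * w i) : ℝ × ℝ)) ''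
        {w | ∀ i ∈ s, w i ∈ Set.Icc (0 : ℝ) 1}) := by
  set π := fun w : ι → ℝ => ((a0 + ∑ i ∈ s, a i * w i, b0 + ∑ i ∈ s, b i * w i) : ℝ × ℝ)
  set γ := fun i => a i - c * b i
  let l : StrongDual ℝ (ℝ × ℝ) :=
    ContinuousLinearMap.fst ℝ ℝ ℝ - c • ContinuousLinearMap.snd ℝ ℝ ℝ
  have hl : ∀ w, l (π w) = a0 - c * b0 + ∑ i ∈ s, γ i * w i := by
    intro w
    simp only [l, π, γ, sub_apply, smul_apply, ContinuousLinearMap.coe_fst',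
      ContinuousLinearMap.coe_snd', smul_eq_mul, sub_mul, sum_sub_distrib]
    rw [mul_add, mul_sum]
    simp only [mul_assoc]
    ring
  have hpos : ∀ i ∈ T, 0 < γ i := fun i hi => sub_pos.mpr (hright i hi)
  have hneg : ∀ i ∈ s, i ∉ T → γ i < 0 := fun i hi hiT => sub_neg.mpr (hleft i hi hiT)
  have hvertex : π (cubeVertex T) = (a0 + ∑ i ∈ T, a i, b0 + ∑ i ∈ T, b i) := by
    simp only [π, sum_mul_cubeVertex hT]
  rw [← hvertex]
  refine exposedPoints_subset_extremePoints
    ⟨⟨cubeVertex T, fun i _ => cubeVertex_mem_Icc T i, rfl⟩, l, ?_⟩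
  rintro _ ⟨w, hw, rfl⟩
  have hle := sum_mul_le_sum_mul_cubeVertex hpos hneg hw
  rw [hl, hl]
  refine ⟨by linarith, fun hge => ?_⟩
  have hvw := eq_cubeVertex_of_sum_mul_eq hpos hneg hw (le_antisymm hle (by linarith))
  have hsum : ∀ f : ι → ℝ, ∑ i ∈ s, f i * w i = ∑ i ∈ s, f i * cubeVertex T i :=
    fun f => sum_congr rfl fun i hi => by rw [hvw i hi]
  simp only [π, hsum]

theorem strictMonoOn_sum_Icc_one {b : ℕ → ℝ} {k : ℕ} (hb : ∀ i, 1 ≤ i → i ≤ k → 0 < b i) :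
    StrictMonoOn (fun n => ∑ i ∈ Icc 1 n, b i) (Set.Iic k) := by
  intro s _ t (ht : t ≤ k) hst
  refine sum_lt_sum_of_subset (Icc_subset_Icc_right hst.le) (i := t)
    (mem_Icc.mpr ⟨by omega, le_rfl⟩) (by simp only [mem_Icc]; omega) (hb t (by omega) ht) ?_
  intro i hi _
  exact (hb i (mem_Icc.mp hi).1 ((mem_Icc.mp hi).2.trans ht)).le

/-- for sorted positive generators (`b i > 0`,
`a 1 / b 1 > … > a k / b k`), the partial-sum points
`P j = (a0 + Σ_{i≤j} a i, b0 + Σ_{i≤j} b i)`, `j = 0,…,k`, are pairwise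
distinct extreme points of the zonogon `π([0,1]^k)`. -/
theorem rightside_points_are_vertices
    (k : ℕ) (a b : ℕ → ℝ) (a0 b0 : ℝ)
    (hb : ∀ i, 1 ≤ i → i ≤ k → 0 < b i)
    (hsort : ∀ i j, 1 ≤ i → i < j → j ≤ k → a j / b j < a i / b i) :
    (∀ s t, s ≤ k → t ≤ k → s ≠ t →
      ((a0 + ∑ i ∈ Finset.Icc 1 s, a i, b0 + ∑ i ∈ Finset.Icc 1 s, b i) : ℝ × ℝ)
        ≠ (a0 + ∑ i ∈ Finset.Icc 1 t, a i, b0 + ∑ i ∈ Finset.Icc 1 t, b i)) ∧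
    (∀ j, j ≤ k →
      ((a0 + ∑ i ∈ Finset.Icc 1 j, a i, b0 + ∑ i ∈ Finset.Icc 1 j, b i) : ℝ × ℝ)
        ∈ Set.extremePoints ℝ
          ((fun w : ℕ → ℝ =>
              ((a0 + ∑ i ∈ Finset.Icc 1 k, a i * w i,
                b0 + ∑ i ∈ Finset.Icc 1 k, b i * w i) : ℝ × ℝ)) ''
            { w | ∀ i, 1 ≤ i → i ≤ k → w i ∈ Set.Icc (0 : ℝ) 1 })) := by
  refine ⟨fun s t hs ht hst heq =>
    hst ((strictMonoOn_sum_Icc_one hb).injOn hs ht (add_left_cancel (congrArg Prod.snd heq))),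
    fun j hj => ?_⟩
  let r : ℕ → ℝ := fun i => a i / b i
  obtain ⟨c, hc_right, hc_left⟩ :=
    Order.exists_between_finsets ((Icc (j + 1) k).image r) ((Icc 1 j).image r) (by
      simp only [mem_image, mem_Icc]
      rintro _ ⟨i, hi, rfl⟩ _ ⟨i', hi', rfl⟩
      exact hsort i' i hi'.1 (by omega) hi.2)
  have hcube : {w : ℕ → ℝ | ∀ i, 1 ≤ i → i ≤ k → w i ∈ Set.Icc (0 : ℝ) 1}
      = {w | ∀ i ∈ Icc 1 k, w i ∈ Set.Icc (0 : ℝ) 1} := by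
    simp only [mem_Icc, and_imp]
  rw [hcube]
  refine mem_extremePoints_zonogon_of_separated (c := c) (Icc_subset_Icc_right hj)
    (fun i hi => ?_) (fun i hi hij => ?_)
  · have hi' := mem_Icc.mp hi
    exact (lt_div_iff₀ (hb i hi'.1 (hi'.2.trans hj))).mp (hc_left _ (mem_image_of_mem r hi))
  · have hi' := mem_Icc.mp hi
    have hjk : i ∈ Icc (j + 1) k := by simp only [mem_Icc] at hij ⊢; omega
    exact (div_lt_iff₀ (hb i hi'.1 hi'.2)).mp (hc_right _ (mem_image_of_mem r hjk))
end

section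
/- Fix k ∈ ℕ, vectors a, b ∈ ℝ^k and scalars a₀, b₀ ∈ ℝ with b_i > 0 for every i and a₁/b₁ > a₂/b₂ > … > a_k/b_k; write θ₁(w) = a₀ + Σ_i a_i·w_i and θ₂(w) = b₀ + Σ_i b_i·w_i, and P_j := (a₀ + Σ_{i=1}^j a_i, b₀ + Σ_{i=1}^j b_i) for j = 0,…,k. Let f : ℝ → ℝ be convex. Then there exists j ∈ {0,1,…,k} such that for every w ∈ [0,1]^k, θ₁(w) + f(θ₂(w)) ≤ (P_j)₁ + f((P_j)₂); that is, the maximum of θ₁ + f(θ₂) over the zonogon π([0,1]^k) is attained at one of the right-side vertices P₀, …, P_k. -/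
/-!
Fix `w` in the cube and let `c` be a subgradient of `f` at `θ₂(w)` (the right derivative). The
tangent line gives `θ₁(w) + f(θ₂(w)) ≤ (θ₁ + c θ₂)(w) - c s + f(s)` for every `s`. The linear
functional `θ₁ + c θ₂` is maximised on the cube by `w_i = 1` exactly where `a_i + c b_i ≥ 0`, and
since `a_i / b_i` decreases these indices form a prefix `1, …, j`: the maximiser is `P_j`. Taking
`s = (P_j)₂` shows `w` is dominated by the vertex `P_j`, so the best vertex dominates all of them.
-/

open Set Finset

lemma ConvexOn.add_rightDeriv_mul_sub_le {f : ℝ → ℝ} (hf : ConvexOn ℝ univ f) (t s : ℝ) :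
    f t + derivWithin f (Ioi t) t * (s - t) ≤ f s := by
  have ht : t ∈ interior univ := by simp
  rcases lt_trichotomy s t with hst | rfl | hts
  · have h := (hf.slope_le_leftDeriv_of_mem_interior (mem_univ s) ht hst).trans
      (hf.leftDeriv_le_rightDeriv_of_mem_interior ht)
    rw [slope_def_field, div_le_iff₀ (sub_pos.mpr hst)] at h
    linarith
  · simp
  · have h := hf.rightDeriv_le_slope_of_mem_interior ht (mem_univ s) hts
    rw [slope_def_field, le_div_iff₀ (sub_pos.mpr hts)] at h
    linarith

lemma Finset.sum_mul_le_sum_filter_nonneg {ι : Type*} (s : Finset ι) (d w : ι → ℝ)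
    (hw : ∀ i ∈ s, w i ∈ Set.Icc (0 : ℝ) 1) :
    ∑ i ∈ s, d i * w i ≤ ∑ i ∈ s with 0 ≤ d i, d i := by
  rw [sum_filter]
  refine sum_le_sum fun i hi => ?_
  obtain ⟨hw0, hw1⟩ := hw i hi
  split_ifs with hd
  · nlinarith
  · nlinarith

lemma Finset.exists_filter_Icc_eq_Icc (k : ℕ) (p : ℕ → Prop) [DecidablePred p]
    (hp : ∀ i j, 1 ≤ i → i ≤ j → j ≤ k → p j → p i) :
    ∃ j ≤ k, {i ∈ Icc 1 k | p i} = Icc 1 j := by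
  set S := {i ∈ Icc 1 k | p i}
  refine ⟨S.sup id, Finset.sup_le fun i hi => (mem_Icc.mp (mem_filter.mp hi).1).2, ?_⟩
  ext i
  constructor
  · intro hi
    exact mem_Icc.mpr ⟨(mem_Icc.mp (mem_filter.mp hi).1).1, le_sup (f := id) hi⟩
  · intro hi
    obtain ⟨hi1, hij⟩ := mem_Icc.mp hi
    have hS : S.Nonempty := by
      refine nonempty_of_ne_empty fun hS => ?_
      rw [hS, sup_empty, bot_eq_zero'] at hij
      omega
    obtain ⟨j, hjS, hj⟩ := exists_mem_eq_sup S hS id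
    rw [hj] at hij
    obtain ⟨hjIcc, hpj⟩ := mem_filter.mp hjS
    have hjk := (mem_Icc.mp hjIcc).2
    exact mem_filter.mpr ⟨mem_Icc.mpr ⟨hi1, hij.trans hjk⟩, hp i j hi1 hij hjk hpj⟩

lemma add_mul_nonneg_of_le_of_div_strictAnti {k : ℕ} {a b : ℕ → ℝ}
    (hb : ∀ i, 1 ≤ i → i ≤ k → 0 < b i)
    (hsort : ∀ i j, 1 ≤ i → i < j → j ≤ k → a j / b j < a i / b i) (c : ℝ) :
    ∀ i j, 1 ≤ i → i ≤ j → j ≤ k → 0 ≤ a j + c * b j → 0 ≤ a i + c * b i := by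
  intro i j hi hij hj hcj
  rcases hij.eq_or_lt with rfl | hlt
  · exact hcj
  have hbi := hb i hi (by omega)
  have hbj := hb j (by omega) hj
  have hcj' : -c ≤ a j / b j := by rw [le_div_iff₀ hbj]; linarith
  have hci : -c < a i / b i := hcj'.trans_lt (hsort i j hi hlt hj)
  rw [lt_div_iff₀ hbi] at hci
  linarith

lemma exists_rightside_vertex_ge {k : ℕ} {a b : ℕ → ℝ} (a0 b0 : ℝ)
    (hb : ∀ i, 1 ≤ i → i ≤ k → 0 < b i)
    (hsort : ∀ i j, 1 ≤ i → i < j → j ≤ k → a j / b j < a i / b i)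
    {f : ℝ → ℝ} (hf : ConvexOn ℝ univ f) {w : ℕ → ℝ}
    (hw : ∀ i, 1 ≤ i → i ≤ k → w i ∈ Set.Icc (0 : ℝ) 1) :
    ∃ j ≤ k, (a0 + ∑ i ∈ Icc 1 k, a i * w i) + f (b0 + ∑ i ∈ Icc 1 k, b i * w i)
      ≤ (a0 + ∑ i ∈ Icc 1 j, a i) + f (b0 + ∑ i ∈ Icc 1 j, b i) := by
  set t := b0 + ∑ i ∈ Icc 1 k, b i * w i
  set c := derivWithin f (Ioi t) t
  obtain ⟨j, hjk, hj⟩ := exists_filter_Icc_eq_Icc k (fun i => 0 ≤ a i + c * b i)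
    (add_mul_nonneg_of_le_of_div_strictAnti hb hsort c)
  refine ⟨j, hjk, ?_⟩
  have hlin := sum_mul_le_sum_filter_nonneg (Icc 1 k) (fun i => a i + c * b i) w
    fun i hi => hw i (mem_Icc.mp hi).1 (mem_Icc.mp hi).2
  rw [hj] at hlin
  simp only [add_mul, sum_add_distrib, mul_assoc, ← mul_sum] at hlin
  have htan := hf.add_rightDeriv_mul_sub_le t (b0 + ∑ i ∈ Icc 1 j, b i)
  linarith

/-- for a zonogon with sorted positive generators, the maximum of
`θ₁ + f(θ₂)` (with `f` convex) over the hypercube is attained at one of the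
right-side vertices `P 0, …, P k`. -/
theorem max_convex_on_zonogon_at_rightside_vertex
    (k : ℕ) (a b : ℕ → ℝ) (a0 b0 : ℝ)
    (hb : ∀ i, 1 ≤ i → i ≤ k → 0 < b i)
    (hsort : ∀ i j, 1 ≤ i → i < j → j ≤ k → a j / b j < a i / b i)
    (f : ℝ → ℝ) (hf : ConvexOn ℝ Set.univ f) :
    ∃ j ≤ k, ∀ w : ℕ → ℝ, (∀ i, 1 ≤ i → i ≤ k → w i ∈ Set.Icc (0 : ℝ) 1) →
      (a0 + ∑ i ∈ Finset.Icc 1 k, a i * w i)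
          + f (b0 + ∑ i ∈ Finset.Icc 1 k, b i * w i)
        ≤ (a0 + ∑ i ∈ Finset.Icc 1 j, a i)
          + f (b0 + ∑ i ∈ Finset.Icc 1 j, b i) := by
  obtain ⟨j₀, hj₀, hmax⟩ := exists_max_image (range (k + 1))
    (fun j => (a0 + ∑ i ∈ Icc 1 j, a i) + f (b0 + ∑ i ∈ Icc 1 j, b i)) nonempty_range_add_one
  refine ⟨j₀, Nat.lt_succ_iff.mp (mem_range.mp hj₀), fun w hw => ?_⟩
  obtain ⟨j, hjk, hj⟩ := exists_rightside_vertex_ge a0 b0 hb hsort hf hw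
  exact hj.trans (hmax j (mem_range.mpr (Nat.lt_succ_of_le hjk)))
end

section
/- Fix k ∈ ℕ, vectors a, b ∈ ℝ^k and scalars a₀, b₀ ∈ ℝ with b_i > 0 for every i and a₁/b₁ > a₂/b₂ > … > a_k/b_k; write θ₁(w) = a₀ + Σ_i a_i·w_i and θ₂(w) = b₀ + Σ_i b_i·w_i, and P_j := (a₀ + Σ_{i=1}^j a_i, b₀ + Σ_{i=1}^j b_i). Let c ∈ ℝ and define t := 0 if a₁/b₁ ≤ c, and otherwise t := max{ i ∈ {1,…,k} : a_i/b_i > c }. Then: (i) for every w ∈ [0,1]^k, θ₁(w) − c·θ₂(w) ≤ (P_t)₁ − c·(P_t)₂; and (ii) every w ∈ [0,1]^k attaining equality in (i) satisfies θ₂(w) ≥ (P_t)₂. That is, P_t is the maximizer of θ₁ − c·θ₂ over the zonogon with the smallest θ₂-coordinate. -/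
/-!
Writing `d i = a i - c * b i`, the objective is `a0 - c * b0 + ∑ i, d i * w i`, a linear function
of `w` over the cube. The sorting of the slopes `a i / b i` and `b i > 0` make `d i > 0` exactly
for `i ≤ t` and `d i ≤ 0` for `i > t`, so the maximum is attained by setting `w i = 1` for `i ≤ t`
and `w i = 0` beyond. Every maximizer has `w i = 1` for `i ≤ t`, hence its `θ₂` is at least that
of `P t`.
-/

open Finset

section Cube

variable {ι : Type*} {s T : Finset ι} {d w : ι → ℝ}

theorem sum_mul_le_sum_mul_of_nonpos_sdiff [DecidableEq ι] (hTs : T ⊆ s) (hw : ∀ i ∈ s, 0 ≤ w i)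
    (hneg : ∀ i ∈ s \ T, d i ≤ 0) : ∑ i ∈ s, d i * w i ≤ ∑ i ∈ T, d i * w i := by
  rw [← sum_sdiff hTs]
  have hout : ∑ i ∈ s \ T, d i * w i ≤ 0 :=
    sum_nonpos fun i hi => mul_nonpos_of_nonpos_of_nonneg (hneg i hi) (hw i (sdiff_subset hi))
  linarith

theorem sum_mul_le_sum_of_nonneg_of_nonpos [DecidableEq ι] (hTs : T ⊆ s)
    (hw : ∀ i ∈ s, w i ∈ Set.Icc 0 1)
    (hpos : ∀ i ∈ T, 0 ≤ d i) (hneg : ∀ i ∈ s \ T, d i ≤ 0) :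
    ∑ i ∈ s, d i * w i ≤ ∑ i ∈ T, d i :=
  calc ∑ i ∈ s, d i * w i ≤ ∑ i ∈ T, d i * w i :=
        sum_mul_le_sum_mul_of_nonpos_sdiff hTs (fun i hi => (hw i hi).1) hneg
    _ ≤ ∑ i ∈ T, d i :=
        sum_le_sum fun i hi => mul_le_of_le_one_right (hpos i hi) (hw i (hTs hi)).2

theorem eq_one_of_sum_mul_eq_sum [DecidableEq ι] (hTs : T ⊆ s) (hw : ∀ i ∈ s, w i ∈ Set.Icc 0 1)
    (hpos : ∀ i ∈ T, 0 < d i) (hneg : ∀ i ∈ s \ T, d i ≤ 0)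
    (heq : ∑ i ∈ s, d i * w i = ∑ i ∈ T, d i) : ∀ i ∈ T, w i = 1 := by
  intro i hi
  by_contra hne
  have hlt : ∑ j ∈ T, d j * w j < ∑ j ∈ T, d j :=
    sum_lt_sum (fun j hj => mul_le_of_le_one_right (hpos j hj).le (hw j (hTs hj)).2)
      ⟨i, hi, mul_lt_of_lt_one_right (hpos i hi) (lt_of_le_of_ne (hw i (hTs hi)).2 hne)⟩
  have := sum_mul_le_sum_mul_of_nonpos_sdiff hTs (fun i hi => (hw i hi).1) hneg
  linarith

theorem sum_le_sum_mul_of_eq_one (hTs : T ⊆ s) (hd : ∀ i ∈ s, 0 ≤ d i) (hw : ∀ i ∈ s, 0 ≤ w i)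
    (hone : ∀ i ∈ T, w i = 1) : ∑ i ∈ T, d i ≤ ∑ i ∈ s, d i * w i :=
  calc ∑ i ∈ T, d i = ∑ i ∈ T, d i * w i := sum_congr rfl fun i hi => by rw [hone i hi, mul_one]
    _ ≤ ∑ i ∈ s, d i * w i :=
        sum_le_sum_of_subset_of_nonneg hTs fun i hi _ => mul_nonneg (hd i hi) (hw i hi)

theorem add_sum_mul_sub_mul_add_sum_mul (s : Finset ι) (a b w : ι → ℝ) (a0 b0 c : ℝ) :
    (a0 + ∑ i ∈ s, a i * w i) - c * (b0 + ∑ i ∈ s, b i * w i)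
      = (a0 - c * b0) + ∑ i ∈ s, (a i - c * b i) * w i := by
  simp only [sub_mul, sum_sub_distrib, mul_add, mul_sum, mul_assoc]
  ring

end Cube

section Threshold

/-- `t` is the last index with slope `a t / b t > c`, or `0` if there is none. -/
def IsThresholdIndex (k : ℕ) (a b : ℕ → ℝ) (c : ℝ) (t : ℕ) : Prop :=
  (a 1 / b 1 ≤ c ∧ t = 0) ∨
    (c < a 1 / b 1 ∧ 1 ≤ t ∧ t ≤ k ∧ c < a t / b t ∧ ∀ i, t < i → i ≤ k → a i / b i ≤ c)

variable {k t : ℕ} {a b : ℕ → ℝ} {c : ℝ}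

theorem IsThresholdIndex.le (ht : IsThresholdIndex k a b c t) : t ≤ k := by
  rcases ht with ⟨_, rfl⟩ | ⟨_, _, htk, _⟩
  · exact Nat.zero_le k
  · exact htk

theorem IsThresholdIndex.sub_mul_pos (hb : ∀ i, 1 ≤ i → i ≤ k → 0 < b i)
    (hsort : ∀ i j, 1 ≤ i → i < j → j ≤ k → a j / b j < a i / b i)
    (ht : IsThresholdIndex k a b c t) : ∀ i ∈ Icc 1 t, 0 < a i - c * b i := by
  intro i hi
  obtain ⟨hi1, hit⟩ := mem_Icc.1 hi
  rcases ht with ⟨_, rfl⟩ | ⟨_, _, htk, hct, _⟩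
  · omega
  have hci : c < a i / b i := by
    rcases hit.eq_or_lt with rfl | hlt
    · exact hct
    · exact hct.trans (hsort i t hi1 hlt htk)
  exact sub_pos.2 ((lt_div_iff₀ (hb i hi1 (hit.trans htk))).1 hci)

theorem IsThresholdIndex.sub_mul_nonpos (hb : ∀ i, 1 ≤ i → i ≤ k → 0 < b i)
    (hsort : ∀ i j, 1 ≤ i → i < j → j ≤ k → a j / b j < a i / b i)
    (ht : IsThresholdIndex k a b c t) : ∀ i ∈ Icc 1 k \ Icc 1 t, a i - c * b i ≤ 0 := by
  intro i hi
  simp only [mem_sdiff, mem_Icc, not_and, not_le] at hi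
  obtain ⟨⟨hi1, hik⟩, hti⟩ := hi
  have hic : a i / b i ≤ c := by
    rcases ht with ⟨hc, rfl⟩ | ⟨_, _, _, _, hlast⟩
    · rcases hi1.eq_or_lt with rfl | h1i
      · exact hc
      · exact (hsort 1 i le_rfl h1i hik).le.trans hc
    · exact hlast i (hti hi1) hik
  exact sub_nonpos.2 ((div_le_iff₀ (hb i hi1 hik)).1 hic)

end Threshold

theorem maximizer_of_theta1_minus_c_theta2_general
    (k : ℕ) (a b : ℕ → ℝ) (a0 b0 : ℝ)
    (hb : ∀ i, 1 ≤ i → i ≤ k → 0 < b i)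
    (hsort : ∀ i j, 1 ≤ i → i < j → j ≤ k → a j / b j < a i / b i)
    (c : ℝ) (t : ℕ)
    (ht : (a 1 / b 1 ≤ c ∧ t = 0) ∨
      (c < a 1 / b 1 ∧ 1 ≤ t ∧ t ≤ k ∧ c < a t / b t ∧
        ∀ i, t < i → i ≤ k → a i / b i ≤ c)) :
    (∀ w : ℕ → ℝ, (∀ i, 1 ≤ i → i ≤ k → w i ∈ Set.Icc (0 : ℝ) 1) →
      (a0 + ∑ i ∈ Finset.Icc 1 k, a i * w i)
          - c * (b0 + ∑ i ∈ Finset.Icc 1 k, b i * w i)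
        ≤ (a0 + ∑ i ∈ Finset.Icc 1 t, a i)
          - c * (b0 + ∑ i ∈ Finset.Icc 1 t, b i)) ∧
    (∀ w : ℕ → ℝ, (∀ i, 1 ≤ i → i ≤ k → w i ∈ Set.Icc (0 : ℝ) 1) →
      (a0 + ∑ i ∈ Finset.Icc 1 k, a i * w i)
          - c * (b0 + ∑ i ∈ Finset.Icc 1 k, b i * w i)
        = (a0 + ∑ i ∈ Finset.Icc 1 t, a i)
          - c * (b0 + ∑ i ∈ Finset.Icc 1 t, b i) →
      b0 + ∑ i ∈ Finset.Icc 1 t, b i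
        ≤ b0 + ∑ i ∈ Finset.Icc 1 k, b i * w i) := by
  have hTs : Icc 1 t ⊆ Icc 1 k := Icc_subset_Icc_right (IsThresholdIndex.le ht)
  have hpos := IsThresholdIndex.sub_mul_pos hb hsort ht
  have hneg := IsThresholdIndex.sub_mul_nonpos hb hsort ht
  have hvertex : (a0 + ∑ i ∈ Icc 1 t, a i) - c * (b0 + ∑ i ∈ Icc 1 t, b i)
      = (a0 - c * b0) + ∑ i ∈ Icc 1 t, (a i - c * b i) := by
    simpa only [mul_one] using add_sum_mul_sub_mul_add_sum_mul (Icc 1 t) a b (fun _ => 1) a0 b0 c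
  have hcube {w : ℕ → ℝ} (hw : ∀ i, 1 ≤ i → i ≤ k → w i ∈ Set.Icc (0 : ℝ) 1) :
      ∀ i ∈ Icc 1 k, w i ∈ Set.Icc (0 : ℝ) 1 := fun i hi => hw i (mem_Icc.1 hi).1 (mem_Icc.1 hi).2
  refine ⟨fun w hw => ?_, fun w hw heq => ?_⟩
  · rw [add_sum_mul_sub_mul_add_sum_mul, hvertex]
    gcongr
    exact sum_mul_le_sum_of_nonneg_of_nonpos hTs (hcube hw) (fun i hi => (hpos i hi).le) hneg
  · rw [add_sum_mul_sub_mul_add_sum_mul, hvertex, add_right_inj] at heq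
    gcongr
    exact sum_le_sum_mul_of_eq_one hTs (fun i hi => (hb i (mem_Icc.1 hi).1 (mem_Icc.1 hi).2).le)
      (fun i hi => (hcube hw i hi).1) (eq_one_of_sum_mul_eq_sum hTs (hcube hw) hpos hneg heq)

/-- for a zonogon with sorted positive generators and the index
`t` defined by `t = 0` if `a 1 / b 1 ≤ c` and otherwise
`t = max { i : a i / b i > c }`, the right-side vertex `P t` maximizes
`θ₁ - c·θ₂` over the hypercube, and it is the maximizer with smallest
`θ₂`-coordinate. -/
theorem maximizer_of_theta1_minus_c_theta2
    (k : ℕ) (hk : 1 ≤ k) (a b : ℕ → ℝ) (a0 b0 : ℝ)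
    (hb : ∀ i, 1 ≤ i → i ≤ k → 0 < b i)
    (hsort : ∀ i j, 1 ≤ i → i < j → j ≤ k → a j / b j < a i / b i)
    (c : ℝ) (t : ℕ)
    (ht : (a 1 / b 1 ≤ c ∧ t = 0) ∨
      (c < a 1 / b 1 ∧ 1 ≤ t ∧ t ≤ k ∧ c < a t / b t ∧
        ∀ i, t < i → i ≤ k → a i / b i ≤ c)) :
    (∀ w : ℕ → ℝ, (∀ i, 1 ≤ i → i ≤ k → w i ∈ Set.Icc (0 : ℝ) 1) →
      (a0 + ∑ i ∈ Finset.Icc 1 k, a i * w i)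
          - c * (b0 + ∑ i ∈ Finset.Icc 1 k, b i * w i)
        ≤ (a0 + ∑ i ∈ Finset.Icc 1 t, a i)
          - c * (b0 + ∑ i ∈ Finset.Icc 1 t, b i)) ∧
    (∀ w : ℕ → ℝ, (∀ i, 1 ≤ i → i ≤ k → w i ∈ Set.Icc (0 : ℝ) 1) →
      (a0 + ∑ i ∈ Finset.Icc 1 k, a i * w i)
          - c * (b0 + ∑ i ∈ Finset.Icc 1 k, b i * w i)
        = (a0 + ∑ i ∈ Finset.Icc 1 t, a i)
          - c * (b0 + ∑ i ∈ Finset.Icc 1 t, b i) →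
      b0 + ∑ i ∈ Finset.Icc 1 t, b i
        ≤ b0 + ∑ i ∈ Finset.Icc 1 k, b i * w i) :=
  maximizer_of_theta1_minus_c_theta2_general k a b a0 b0 hb hsort c t ht
end
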